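/- For nonnegative integers $k_1,\dots,k_5$, if at least three of the $k_i$ are nonzero, then $-7 + (2s_1 - 4)s_1 + (s_1 - 3)s_2 + s_3 \geq 0$, where $s_j$ denotes the $j$th elementary symmetric polynomial in $k_1,\dots,k_5$. -/

import Mathlib

/-! At least three nonzero entries force `s₁ ≥ 3` and `s₃ ≥ 1`, while `s₂ ≥ 0` always. On that
range the expression is increasing in each `sⱼ`, and it vanishes at `(s₁, s₂, s₃) = (3, 0, 1)`. -/

/-- The `j`th elementary symmetric polynomial of `k : Fin 5 → ℕ`, as an integer. -/
def S (k : Fin 5 → ℕ) (j : ℕ) : ℤ :=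
  ∑ P ∈ Finset.powersetCard j (Finset.univ : Finset (Fin 5)), ∏ i ∈ P, (k i : ℤ)

open Finset

section ElementarySymmetric

variable {ι : Type*} [Fintype ι] (k : ι → ℕ)

theorem card_ne_zero_le_sum : #{i | k i ≠ 0} ≤ ∑ i, k i := by
  rw [← sum_filter_ne_zero]
  simpa using card_nsmul_le_sum {i | k i ≠ 0} k 1 fun i hi =>
    Nat.one_le_iff_ne_zero.2 (mem_filter.1 hi).2

theorem sum_powersetCard_one_prod :
    ∑ P ∈ powersetCard 1 univ, ∏ i ∈ P, (k i : ℤ) = ∑ i, (k i : ℤ) := by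
  simp [powersetCard_one]

theorem sum_powersetCard_prod_nonneg (j : ℕ) :
    0 ≤ ∑ P ∈ powersetCard j univ, ∏ i ∈ P, (k i : ℤ) :=
  sum_nonneg fun _ _ => prod_nonneg fun i _ => Int.natCast_nonneg (k i)

theorem one_le_sum_powersetCard_prod {j : ℕ} (h : j ≤ #{i | k i ≠ 0}) :
    1 ≤ ∑ P ∈ powersetCard j univ, ∏ i ∈ P, (k i : ℤ) := by
  obtain ⟨T, hT, rfl⟩ := exists_subset_card_eq h
  calc 1 ≤ ∏ i ∈ T, (k i : ℤ) := one_le_prod fun i hi => by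
          exact_mod_cast Nat.one_le_iff_ne_zero.2 (mem_filter.1 (hT hi)).2
    _ ≤ _ := single_le_sum (f := fun P => ∏ i ∈ P, (k i : ℤ))
          (fun P _ => prod_nonneg fun i _ => Int.natCast_nonneg (k i))
          (mem_powersetCard.2 ⟨subset_univ T, rfl⟩)

end ElementarySymmetric

theorem genus2_expr_nonneg {s₁ s₂ s₃ : ℤ} (h₁ : 3 ≤ s₁) (h₂ : 0 ≤ s₂) (h₃ : 1 ≤ s₃) :
    0 ≤ -7 + (2 * s₁ - 4) * s₁ + (s₁ - 3) * s₂ + s₃ := by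
  nlinarith [mul_nonneg (sub_nonneg.2 h₁) h₂]

theorem genus2_three_nonzero (k : Fin 5 → ℕ)
    (h : 3 ≤ (Finset.univ.filter (fun i => k i ≠ 0)).card) :
    0 ≤ -7 + (2 * S k 1 - 4) * S k 1 + (S k 1 - 3) * S k 2 + S k 3 := by
  have h₁ : 3 ≤ S k 1 := by
    rw [S, sum_powersetCard_one_prod, ← Nat.cast_sum]
    exact_mod_cast h.trans (card_ne_zero_le_sum k)
  exact genus2_expr_nonneg h₁ (sum_powersetCard_prod_nonneg k 2)
    (one_le_sum_powersetCard_prod k h)
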